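/- arXiv:2509.23840 — 3 statements merged into one kernel-verified Lean document; each statement's English description precedes it below -/
import Mathlib

section
/- Let $E$ be a real inner product space and $\Psi : E \to \mathbb{R}$ a convex differentiable function. Let $x \in E$, let $\gamma \in [0,1]$, let $I$ be a nonempty finite index set of cardinality $m$, and for each $i \in I$ let $x_i, s_i \in E$ and $C_i \in \mathbb{R}$ be such that the single-block progress inequality holds: $\Psi(x + \gamma(s_i - x_i)) \leq \Psi(x) + \gamma \langle \nabla \Psi(x), s_i - x_i \rangle + \frac{\gamma^2}{2} C_i$. Define the block gaps $g_i := \langle \nabla \Psi(x), x_i - s_i \rangle$. Then the averaged batched update satisfies $\Psi\big(x + \frac{\gamma}{m}\sum_{i \in I}(s_i - x_i)\big) \leq \Psi(x) - \frac{\gamma}{m}\sum_{i \in I} g_i + \frac{\gamma^2}{2m}\sum_{i \in I} C_i$. -/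
open RealInnerProductSpace

/-- **Batched per-iteration descent inequality for SOFW.**
If each single-block update satisfies the curvature-based progress inequality, then the
averaged batched update over a nonempty mini-batch `I` of cardinality `m` satisfies
`Ψ (x + (γ/m) • ∑ i ∈ I, (s i - x i)) ≤ Ψ x - (γ/m) ∑ g i + (γ²/(2m)) ∑ C i`,
where `g i = ⟪∇Ψ x, x i - s i⟫`. -/
theorem batched_single_block_progress
    {E : Type*} [NormedAddCommGroup E] [InnerProductSpace ℝ E] [CompleteSpace E]
    (Ψ : E → ℝ) (hconv : ConvexOn ℝ Set.univ Ψ) (hdiff : Differentiable ℝ Ψ)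
    (x : E) (γ : ℝ) (hγ0 : 0 ≤ γ) (hγ1 : γ ≤ 1)
    {ι : Type*} (I : Finset ι) (hI : I.Nonempty) (m : ℕ) (hm : I.card = m)
    (xb sb : ι → E) (C : ι → ℝ)
    (hblock : ∀ i ∈ I,
      Ψ (x + γ • (sb i - xb i)) ≤
        Ψ x + γ * ⟪gradient Ψ x, sb i - xb i⟫ + γ ^ 2 / 2 * C i)
    (g : ι → ℝ) (hg : ∀ i, g i = ⟪gradient Ψ x, xb i - sb i⟫) :
    Ψ (x + (γ / (m : ℝ)) • ∑ i ∈ I, (sb i - xb i)) ≤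
      Ψ x - γ / (m : ℝ) * ∑ i ∈ I, g i + γ ^ 2 / (2 * (m : ℝ)) * ∑ i ∈ I, C i := by
  have hm0 : 0 < (m : ℝ) := by
    have : 0 < I.card := Finset.card_pos.mpr hI
    exact_mod_cast hm ▸ this
  set w : ι → ℝ := fun _ => (m : ℝ)⁻¹ with hw
  have hw0 : ∀ i ∈ I, 0 ≤ w i := fun i _ => by positivity
  have hw1 : ∑ i ∈ I, w i = 1 := by
    simp [hw, hm, Finset.sum_const]
    field_simp
  have hrewrite : x + (γ / (m : ℝ)) • ∑ i ∈ I, (sb i - xb i)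
      = ∑ i ∈ I, w i • (x + γ • (sb i - xb i)) := by
    simp only [smul_add, Finset.sum_add_distrib, ← Finset.sum_smul, hw1, one_smul,
      smul_smul]
    congr 1
    rw [Finset.smul_sum]
    refine Finset.sum_congr rfl fun i _ => ?_
    congr 1
    simp [hw]
    ring
  have hjensen := hconv.map_sum_le (p := fun i => x + γ • (sb i - xb i)) hw0 hw1 (fun i _ => Set.mem_univ _)
  rw [hrewrite]
  refine le_trans hjensen ?_
  have hbd : ∑ i ∈ I, w i • Ψ (x + γ • (sb i - xb i))
      ≤ ∑ i ∈ I, w i • (Ψ x + γ * ⟪gradient Ψ x, sb i - xb i⟫ + γ ^ 2 / 2 * C i) := by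
    refine Finset.sum_le_sum fun i hi => ?_
    exact smul_le_smul_of_nonneg_left (hblock i hi) (hw0 i hi)
  refine le_trans hbd (le_of_eq ?_)
  have hginner : ∀ i, ⟪gradient Ψ x, sb i - xb i⟫ = - g i := by
    intro i
    rw [hg i, ← inner_neg_right]
    congr 1
    abel
  have expand : ∀ i, w i • (Ψ x + γ * ⟪gradient Ψ x, sb i - xb i⟫ + γ ^ 2 / 2 * C i)
      = (m:ℝ)⁻¹ * Ψ x + (-(γ/m)) * g i + (γ^2/(2*m)) * C i := by
    intro i
    rw [hginner i, smul_eq_mul, hw]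
    field_simp
  rw [Finset.sum_congr rfl (fun i _ => expand i), Finset.sum_add_distrib,
    Finset.sum_add_distrib, ← Finset.mul_sum, ← Finset.mul_sum, ← Finset.mul_sum,
    Finset.sum_const, hm, nsmul_eq_mul]
  field_simp
  ring
end

section
/- Let $n \geq m \geq 1$ be natural numbers, let $A, \gamma \in \mathbb{R}$, let $g, C : \mathrm{Fin}\ n \to \mathbb{R}$, and let $h$ be a real-valued function on subsets of $\mathrm{Fin}\ n$ such that for every subset $I$ of cardinality $m$ one has $h(I) \leq A - \frac{\gamma}{m}\sum_{i \in I} g_i + \frac{\gamma^2}{2m}\sum_{i \in I} C_i$. Then the average of $h(I)$ over all $\binom{n}{m}$ subsets $I$ of cardinality $m$ satisfies $\frac{1}{\binom{n}{m}}\sum_{|I| = m} h(I) \leq A - \frac{\gamma}{n}\sum_{i=1}^n g_i + \frac{\gamma^2}{2n}\sum_{i=1}^n C_i$. In particular, the bound on the right-hand side does not depend on the batch size $m$. -/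
open Finset

lemma count_mem_powersetCard (n m : ℕ) (hm : 1 ≤ m) (i : Fin n) :
    ((powersetCard m (univ : Finset (Fin n))).filter (fun I => i ∈ I)).card
      = (n - 1).choose (m - 1) := by
  have hcard : (univ.erase i).card = n - 1 := by
    simp [card_erase_of_mem, card_univ]
  rw [← hcard, ← card_powersetCard]
  apply Finset.card_bij' (fun I _ => I.erase i) (fun J _ => insert i J)
  · intro I hI
    simp only [mem_filter, mem_powersetCard] at hI
    exact insert_erase hI.2
  · intro J hJ
    simp only [mem_powersetCard] at hJ
    have hiJ : i ∉ J := fun hi => (mem_erase.1 (hJ.1 hi)).1 rfl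
    rw [erase_insert hiJ]
  · intro I hI
    simp only [mem_filter, mem_powersetCard] at hI ⊢
    refine ⟨fun j hj => mem_erase.2 ⟨(mem_erase.1 hj).1, mem_univ j⟩, ?_⟩
    rw [card_erase_of_mem hI.2, hI.1.2]
  · intro J hJ
    simp only [mem_powersetCard, mem_filter] at hJ ⊢
    have hiJ : i ∉ J := fun hi => (mem_erase.1 (hJ.1 hi)).1 rfl
    refine ⟨⟨subset_univ _, ?_⟩, mem_insert_self i J⟩
    rw [card_insert_of_notMem hiJ, hJ.2]
    omega

lemma sum_powersetCard_sum (n m : ℕ) (hm : 1 ≤ m) (f : Fin n → ℝ) :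
    ∑ I ∈ powersetCard m (univ : Finset (Fin n)), ∑ i ∈ I, f i
      = ((n - 1).choose (m - 1) : ℝ) * ∑ i, f i := by
  have key : ∀ I ∈ powersetCard m (univ : Finset (Fin n)),
      ∑ i ∈ I, f i = ∑ i : Fin n, if i ∈ I then f i else 0 := by
    intro I _
    rw [sum_ite_mem]
    congr 1
    exact (inter_eq_right.2 (subset_univ I)).symm
  rw [sum_congr rfl key, Finset.sum_comm, Finset.mul_sum]
  refine sum_congr rfl fun i _ => ?_
  rw [← sum_filter, sum_const, count_mem_powersetCard n m hm i, nsmul_eq_mul]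

/-- Averaging the batched SOFW descent inequality over all mini-batches of size `m`
yields a bound identical to the non-batched case, independent of `m`. -/
theorem batched_descent_average_bound
    (n m : ℕ) (hm : 1 ≤ m) (hmn : m ≤ n) (A γ : ℝ)
    (g C : Fin n → ℝ) (h : Finset (Fin n) → ℝ)
    (hb : ∀ I : Finset (Fin n), I.card = m →
      h I ≤ A - γ / (m : ℝ) * ∑ i ∈ I, g i + γ ^ 2 / (2 * (m : ℝ)) * ∑ i ∈ I, C i) :
    ((n.choose m : ℝ))⁻¹ *
        ∑ I ∈ Finset.powersetCard m (Finset.univ : Finset (Fin n)), h I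
      ≤ A - γ / (n : ℝ) * ∑ i, g i + γ ^ 2 / (2 * (n : ℝ)) * ∑ i, C i := by
  have hn : 1 ≤ n := le_trans hm hmn
  have hchoose : (0 : ℝ) < (n.choose m : ℝ) := by
    exact_mod_cast Nat.choose_pos hmn
  have hkey : n * (n - 1).choose (m - 1) = m * n.choose m := by
    obtain ⟨n', rfl⟩ := Nat.exists_eq_add_of_le hn
    obtain ⟨m', rfl⟩ := Nat.exists_eq_add_of_le hm
    simp only [Nat.add_sub_cancel_left, Nat.add_sub_cancel]
    have hsmc := Nat.add_one_mul_choose_eq n' m'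
    rw [Nat.add_comm 1 n', Nat.add_comm 1 m', hsmc]; ring
  have hbound : ∑ I ∈ powersetCard m (univ : Finset (Fin n)), h I
      ≤ ∑ I ∈ powersetCard m (univ : Finset (Fin n)),
          (A - γ / (m : ℝ) * ∑ i ∈ I, g i + γ ^ 2 / (2 * (m : ℝ)) * ∑ i ∈ I, C i) :=
    sum_le_sum fun I hI => hb I (mem_powersetCard.1 hI).2
  have hsplit : ∑ I ∈ powersetCard m (univ : Finset (Fin n)),
          (A - γ / (m : ℝ) * ∑ i ∈ I, g i + γ ^ 2 / (2 * (m : ℝ)) * ∑ i ∈ I, C i)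
      = (n.choose m : ℝ) * A
        - γ / (m : ℝ) * (((n - 1).choose (m - 1) : ℝ) * ∑ i, g i)
        + γ ^ 2 / (2 * (m : ℝ)) * (((n - 1).choose (m - 1) : ℝ) * ∑ i, C i) := by
    rw [sum_add_distrib, sum_sub_distrib, sum_const, ← mul_sum, ← mul_sum,
      sum_powersetCard_sum n m hm g, sum_powersetCard_sum n m hm C,
      card_powersetCard, card_univ, Fintype.card_fin, nsmul_eq_mul]
  have hm' : (0 : ℝ) < (m : ℝ) := by exact_mod_cast hm
  have hn' : (0 : ℝ) < (n : ℝ) := by exact_mod_cast hn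
  have hkeyR : (n : ℝ) * ((n - 1).choose (m - 1) : ℝ) = (m : ℝ) * (n.choose m : ℝ) := by
    exact_mod_cast hkey
  have hK : ((n - 1).choose (m - 1) : ℝ) = (m : ℝ) * (n.choose m : ℝ) / (n : ℝ) := by
    field_simp
    linarith [hkeyR]
  calc ((n.choose m : ℝ))⁻¹ * ∑ I ∈ powersetCard m (univ : Finset (Fin n)), h I
      ≤ ((n.choose m : ℝ))⁻¹ * ((n.choose m : ℝ) * A
        - γ / (m : ℝ) * (((n - 1).choose (m - 1) : ℝ) * ∑ i, g i)
        + γ ^ 2 / (2 * (m : ℝ)) * (((n - 1).choose (m - 1) : ℝ) * ∑ i, C i)) := by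
        apply mul_le_mul_of_nonneg_left _ (inv_nonneg.2 hchoose.le)
        rw [← hsplit]; exact hbound
    _ = A - γ / (n : ℝ) * ∑ i, g i + γ ^ 2 / (2 * (n : ℝ)) * ∑ i, C i := by
        rw [hK]; field_simp
end

section
/- Batched SOFW expected primal convergence. Let $n \geq m \geq 1$ be natural numbers, let $E$ be a finite-dimensional real inner product space, and for each block $i \in \mathrm{Fin}\ n$ let $D_i \subseteq E$ be a nonempty convex compact set. Let $\Psi : E \to \mathbb{R}$ be convex and differentiable, and let $C_i \geq 0$ be block curvature constants satisfying: for every family $(x_j)_{j}$ with $x_j \in D_j$, every $s \in D_i$, and every $\gamma \in [0,1]$, $\Psi\big(\sum_j x_j + \gamma(s - x_i)\big) \leq \Psi\big(\sum_j x_j\big) + \gamma \big\langle \nabla \Psi(\sum_j x_j),\, s - x_i \big\rangle + \frac{\gamma^2}{2} C_i$; set $C^{\otimes} = \sum_i C_i$. Fix an initial decomposition $x^0 = (x^0_i)_i$ with $x^0_i \in D_i$, step sizes $\gamma_k = \frac{2n}{k+2n}$, and for each point define Frank-Wolfe atoms $s_i(x) \in \arg\min_{s \in D_i} \langle \nabla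 \Psi(\sum_j x_j), s \rangle$. Given a sequence $\omega = (I_0, I_1, \dots)$ of subsets of $\mathrm{Fin}\ n$ of cardinality $m$, define iterates by $x^{k+1}_i = x^k_i + \frac{\gamma_k}{m}(s_i(x^k) - x^k_i)$ for $i \in I_k$ and $x^{k+1}_i = x^k_i$ otherwise. Let $\Psi^* = \min_{y_i \in D_i} \Psi(\sum_i y_i)$. Then for every $k \geq 0$, the average of $\Psi(\sum_i x^k_i)$ over all $\binom{n}{m}^k$ choices of the batch sequence $(I_0, \dots, I_{k-1})$ (each batch drawn independently and uniformly among subsets of cardinality $m$) satisfies $\mathbb{E}\big[\Psi(\textstyle\sum_i x^k_i)\big] - \Psi^* \leq \frac{2n}{k + 2n}\Big[C^{\otimes} + \Psi(\textstyle\sum_i x^0_i) - \Psi^*\Big]$. -/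
/-!
Fix an iterate `x` and write `g = ∇Ψ(∑ x)`. A batch `I` of size `m` moves `∑ x` to the average
over `i ∈ I` of the single-block moves `∑ x + γ (sᵢ - xᵢ)`, so Jensen's inequality and the
curvature bound give `Ψ(∑ x⁺) ≤ 𝔼_{i ∈ I} [Ψ(∑ x) + γ ⟪g, sᵢ - xᵢ⟫ + γ²/2 Cᵢ]`. The average over
a uniform `m`-subset `I` of an average over `i ∈ I` is the plain average over all `n` blocks,
which is why `m` drops out. Since `sᵢ` minimises `⟪g, ·⟫` on `Dᵢ`, convexity bounds
`∑ᵢ ⟪g, sᵢ - xᵢ⟫` by `Ψ* - Ψ(∑ x)`, so the expected primal gap obeys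
`hₖ₊₁ ≤ (1 - γₖ/n) hₖ + γₖ²/(2n) C⊗`, and induction with `γₖ = 2n/(k+2n)` gives
`hₖ ≤ γₖ (C⊗ + h₀)`.
-/

open RealInnerProductSpace Finset
open scoped BigOperators

theorem ConvexOn.inner_gradient_sub_le {E : Type*} [NormedAddCommGroup E] [InnerProductSpace ℝ E]
    [CompleteSpace E] {f : E → ℝ} (hf : ConvexOn ℝ Set.univ f) {x : E}
    (hfx : DifferentiableAt ℝ f x) (y : E) :
    ⟪gradient f x, y - x⟫ ≤ f y - f x := by
  let ℓ : ℝ →ᵃ[ℝ] E := AffineMap.lineMap x y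
  have hderiv : HasDerivAt (f ∘ ℓ) ⟪gradient f x, y - x⟫ 0 := by
    simpa using hfx.hasGradientAt.hasFDerivAt.comp_hasDerivAt_of_eq (0 : ℝ)
      AffineMap.hasDerivAt_lineMap (by simp)
  simpa [slope, ℓ] using (hf.comp_affineMap ℓ).le_slope_of_hasDerivAt
    (Set.mem_univ 0) (Set.mem_univ 1) one_pos hderiv

theorem ConvexOn.map_inv_card_smul_sum_le_expect {E : Type*} [AddCommGroup E] [Module ℝ E]
    {ι : Type*} {s : Set E} {f : E → ℝ} (hf : ConvexOn ℝ s f) {I : Finset ι} (hI : I.Nonempty)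
    {w : ι → E} (hw : ∀ i ∈ I, w i ∈ s) :
    f ((#I : ℝ)⁻¹ • ∑ i ∈ I, w i) ≤ 𝔼 i ∈ I, f (w i) := by
  have hcard : (#I : ℝ) ≠ 0 := by exact_mod_cast hI.card_pos.ne'
  have := hf.map_sum_le (t := I) (w := fun _ => (#I : ℝ)⁻¹) (p := w) (fun _ _ => by positivity)
    (by simp [hcard]) hw
  simpa [← smul_sum, ← mul_sum, expect_eq_sum_div_card, inv_mul_eq_div, sum_div] using this

theorem Finset.sum_powersetCard_sum {ι M : Type*} [DecidableEq ι] [AddCommMonoid M]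
    (s : Finset ι) {m : ℕ} (hm : m ≠ 0) (f : ι → M) :
    ∑ I ∈ s.powersetCard m, ∑ i ∈ I, f i = (#s - 1).choose (m - 1) • ∑ i ∈ s, f i := by
  have hcount : ∀ i ∈ s, #{I ∈ s.powersetCard m | i ∈ I} = (#s - 1).choose (m - 1) := by
    intro i hi
    simpa using card_filter_powersetCard_subset {i} s m (by simpa) (by simp; omega)
  calc ∑ I ∈ s.powersetCard m, ∑ i ∈ I, f i
      = ∑ I ∈ s.powersetCard m, ∑ i ∈ s, if i ∈ I then f i else 0 := by
        refine sum_congr rfl fun I hI => ?_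
        rw [sum_ite_mem, inter_eq_right.2 (mem_powersetCard.1 hI).1]
    _ = ∑ i ∈ s, #{I ∈ s.powersetCard m | i ∈ I} • f i := by
        rw [sum_comm]
        exact sum_congr rfl fun i _ => by rw [← sum_filter, sum_const]
    _ = (#s - 1).choose (m - 1) • ∑ i ∈ s, f i := by
        rw [smul_sum]
        exact sum_congr rfl fun i hi => by rw [hcount i hi]

theorem Finset.expect_powersetCard_expect {ι K : Type*} [DecidableEq ι] [Semifield K]
    [CharZero K] (s : Finset ι) {m : ℕ} (hm : m ≠ 0) (hms : m ≤ #s) (f : ι → K) :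
    𝔼 I ∈ s.powersetCard m, 𝔼 i ∈ I, f i = 𝔼 i ∈ s, f i := by
  obtain ⟨m, rfl⟩ := Nat.exists_eq_add_one_of_ne_zero hm
  obtain ⟨n, hn⟩ : ∃ n, #s = n + 1 := ⟨#s - 1, by omega⟩
  have hchoose : ((n + 1 : ℕ) : K) * n.choose m = (n + 1).choose (m + 1) * (m + 1 : ℕ) := by
    exact_mod_cast Nat.add_one_mul_choose_eq n m
  have hpos : (n.choose m : K) ≠ 0 := Nat.cast_ne_zero.2 (Nat.choose_pos (by omega)).ne'
  calc 𝔼 I ∈ s.powersetCard (m + 1), 𝔼 i ∈ I, f i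
      = 𝔼 I ∈ s.powersetCard (m + 1), (∑ i ∈ I, f i) / (m + 1 : ℕ) :=
        expect_congr rfl fun I hI => by rw [expect_eq_sum_div_card, (mem_powersetCard.1 hI).2]
    _ = 𝔼 i ∈ s, f i := by
        rw [expect_eq_sum_div_card, expect_eq_sum_div_card, ← sum_div,
          sum_powersetCard_sum s hm, card_powersetCard, nsmul_eq_mul, hn,
          Nat.add_sub_cancel, Nat.add_sub_cancel, div_div, mul_comm _ ((n + 1).choose _ : K),
          ← hchoose]
        field_simp

theorem Fintype.expect_piFinset_succ {α M : Type*} [AddCommMonoid M] [Module ℚ≥0 M]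
    (P : Finset α) {k : ℕ} (f : (Fin (k + 1) → α) → M) :
    𝔼 σ ∈ Fintype.piFinset (fun _ : Fin (k + 1) => P), f σ =
      𝔼 σ ∈ Fintype.piFinset (fun _ : Fin k => P), 𝔼 I ∈ P, f (Fin.snoc σ I) := by
  rw [← expect_product' (f := fun σ I => f (Fin.snoc σ I))]
  refine expect_nbij' (fun σ => (Fin.init σ, σ (Fin.last k))) (fun p => Fin.snoc p.1 p.2)
    (fun σ hσ => ?_) (fun p hp => ?_) (fun σ _ => Fin.snoc_init_self σ) (fun p _ => by simp)
    (fun σ _ => by simp only [Fin.snoc_init_self])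
  · rw [Fintype.mem_piFinset] at hσ
    exact mem_product.2 ⟨Fintype.mem_piFinset.2 fun j => hσ _, hσ _⟩
  · rw [mem_product, Fintype.mem_piFinset] at hp
    exact Fintype.mem_piFinset.2 <|
      Fin.lastCases (by simpa using hp.2) fun j => by simpa using hp.1 j

theorem Fintype.expect_piFinset_const_eq_inv_pow_mul_sum {α K : Type*} [Semifield K]
    [CharZero K] (P : Finset α) (k : ℕ) (f : (Fin k → α) → K) :
    𝔼 σ ∈ Fintype.piFinset (fun _ : Fin k => P), f σ =
      ((#P : K) ^ k)⁻¹ * ∑ σ ∈ Fintype.piFinset (fun _ : Fin k => P), f σ := by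
  rw [Finset.expect_eq_sum_div_card, Fintype.card_piFinset_const, div_eq_inv_mul, Nat.cast_pow]

/-- Extends the first `k` batches `σ` by the filler `d`, which never affects the first `k`
iterates (`trajectory_congr`). -/
def padSeq {α : Type*} (d : α) {k : ℕ} (σ : Fin k → α) : ℕ → α :=
  fun j => if h : j < k then σ ⟨j, h⟩ else d

section Trajectory

variable {α β : Type*} {X : (ℕ → α) → ℕ → β} {T : ℕ → β → α → β} {x₀ : β}

theorem trajectory_mem (hX0 : ∀ ω, X ω 0 = x₀) (hX : ∀ ω k, X ω (k + 1) = T k (X ω k) (ω k))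
    {S : Set β} (h₀ : x₀ ∈ S) (hT : ∀ k, ∀ x ∈ S, ∀ I, T k x I ∈ S) (ω : ℕ → α) (k : ℕ) :
    X ω k ∈ S := by
  induction k with
  | zero => rwa [hX0]
  | succ k ih => rw [hX]; exact hT k _ ih _

theorem trajectory_congr (hX0 : ∀ ω, X ω 0 = x₀) (hX : ∀ ω k, X ω (k + 1) = T k (X ω k) (ω k))
    {ω ω' : ℕ → α} {k : ℕ} (h : ∀ j < k, ω j = ω' j) : X ω k = X ω' k := by
  induction k with
  | zero => rw [hX0, hX0]
  | succ k ih =>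
    rw [hX, hX, ih fun j hj => h j (by omega), h k (by omega)]

theorem trajectory_padSeq_snoc (hX0 : ∀ ω, X ω 0 = x₀)
    (hX : ∀ ω k, X ω (k + 1) = T k (X ω k) (ω k)) (d : α) {k : ℕ} (σ : Fin k → α) (I : α) :
    X (padSeq d (Fin.snoc σ I)) (k + 1) = T k (X (padSeq d σ) k) I := by
  rw [hX, trajectory_congr hX0 hX (ω' := padSeq d σ) fun j hj => ?_]
  · simp [padSeq, Fin.snoc]
  · simp [padSeq, hj, Fin.snoc, show j < k + 1 by omega]

theorem expect_trajectory_succ_le (hX0 : ∀ ω, X ω 0 = x₀)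
    (hX : ∀ ω k, X ω (k + 1) = T k (X ω k) (ω k)) {P : Finset α} (hP : P.Nonempty) (d : α)
    (F : β → ℝ) (k : ℕ) {a b c : ℝ}
    (hstep : ∀ ω, 𝔼 I ∈ P, F (T k (X ω k) I) - c ≤ a * (F (X ω k) - c) + b) :
    𝔼 σ ∈ Fintype.piFinset (fun _ : Fin (k + 1) => P), F (X (padSeq d σ) (k + 1)) - c ≤
      a * (𝔼 σ ∈ Fintype.piFinset (fun _ : Fin k => P), F (X (padSeq d σ) k) - c) + b := by
  have hP' : (Fintype.piFinset fun _ : Fin k => P).Nonempty :=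
    Fintype.piFinset_nonempty.2 fun _ => hP
  simp only [Fintype.expect_piFinset_succ, trajectory_padSeq_snoc hX0 hX]
  calc _ = 𝔼 σ ∈ Fintype.piFinset (fun _ : Fin k => P),
          (𝔼 I ∈ P, F (T k (X (padSeq d σ) k) I) - c) := by
        rw [expect_sub_distrib, expect_const hP']
    _ ≤ 𝔼 σ ∈ Fintype.piFinset (fun _ : Fin k => P), (a * (F (X (padSeq d σ) k) - c) + b) :=
        expect_le_expect fun σ _ => hstep (padSeq d σ)
    _ = _ := by
        rw [expect_add_distrib, ← mul_expect, expect_sub_distrib, expect_const hP',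
          expect_const hP']

end Trajectory

theorem two_mul_div_add_two_mul_mem_Icc {N : ℝ} (hN : 0 ≤ N) (k : ℕ) :
    2 * N / (k + 2 * N) ∈ Set.Icc 0 1 :=
  ⟨by positivity, div_le_one_of_le₀ (by linarith [k.cast_nonneg (α := ℝ)]) (by positivity)⟩

theorem le_mul_of_le_one_sub_div_mul_add {N c B : ℝ} {γ h : ℕ → ℝ} (hN : 1 ≤ N)
    (hγ : ∀ k : ℕ, γ k = 2 * N / (k + 2 * N)) (hc : 0 ≤ c) (hcB : c ≤ B) (h0 : h 0 ≤ B)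
    (hrec : ∀ k, h (k + 1) ≤ (1 - γ k / N) * h k + γ k ^ 2 / (2 * N) * c) (k : ℕ) :
    h k ≤ γ k * B := by
  have hB : 0 ≤ B := hc.trans hcB
  induction k with
  | zero => simpa [hγ, (show 2 * N ≠ 0 by positivity)] using h0
  | succ k ih =>
    set a : ℝ := k + 2 * N
    have ha : 2 ≤ a := by linarith [k.cast_nonneg (α := ℝ)]
    have hγk : γ k = 2 * N / a := hγ k
    have hγk1 : γ (k + 1) = 2 * N / (a + 1) := by rw [hγ]; push_cast; ring
    have hcoef : 0 ≤ 1 - γ k / N := by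
      rw [hγk, sub_nonneg, div_le_one (by positivity), div_le_iff₀ (by positivity)]
      nlinarith
    calc h (k + 1) ≤ (1 - γ k / N) * h k + γ k ^ 2 / (2 * N) * c := hrec k
      _ ≤ (1 - γ k / N) * (γ k * B) + γ k ^ 2 / (2 * N) * B := by gcongr
      _ = 2 * N * (a - 1) / a ^ 2 * B := by rw [hγk]; field_simp; ring
      _ ≤ 2 * N / (a + 1) * B := by
        refine mul_le_mul_of_nonneg_right ?_ hB
        rw [div_le_div_iff₀ (by positivity) (by positivity)]
        nlinarith
      _ = γ (k + 1) * B := by rw [hγk1]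

section BlockUpdate

variable {ι E : Type*} [DecidableEq ι] [AddCommGroup E] [Module ℝ E]

def blockUpdate (x v : ι → E) (t : ℝ) (I : Finset ι) : ι → E :=
  fun i => if i ∈ I then x i + t • (v i - x i) else x i

theorem blockUpdate_mem {D : ι → Set E} (hD : ∀ i, Convex ℝ (D i)) {x v : ι → E}
    (hx : ∀ i, x i ∈ D i) (hv : ∀ i, v i ∈ D i) {t : ℝ} (ht : t ∈ Set.Icc 0 1) (I : Finset ι)
    (i : ι) : blockUpdate x v t I i ∈ D i := by
  unfold blockUpdate
  split_ifs
  exacts [(hD i).add_smul_sub_mem (hx i) (hv i) ht, hx i]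

theorem sum_blockUpdate [Fintype ι] (x v : ι → E) (t : ℝ) (I : Finset ι) :
    ∑ i, blockUpdate x v t I i = ∑ i, x i + t • ∑ i ∈ I, (v i - x i) := by
  have hsplit : ∀ i, blockUpdate x v t I i = x i + if i ∈ I then t • (v i - x i) else 0 := by
    intro i; unfold blockUpdate; split_ifs <;> simp
  rw [sum_congr rfl fun i _ => hsplit i, sum_add_distrib, sum_ite_mem, univ_inter, smul_sum]

end BlockUpdate

section BlockFrankWolfe

variable {ι E : Type*} [Fintype ι] [NormedAddCommGroup E] [InnerProductSpace ℝ E]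
  [CompleteSpace E]

def HasBlockCurvature (Ψ : E → ℝ) (D : ι → Set E) (C : ι → ℝ) : Prop :=
  ∀ x : ι → E, (∀ j, x j ∈ D j) → ∀ i, ∀ s ∈ D i, ∀ γ ∈ Set.Icc (0 : ℝ) 1,
    Ψ ((∑ j, x j) + γ • (s - x i)) ≤
      Ψ (∑ j, x j) + γ * ⟪gradient Ψ (∑ j, x j), s - x i⟫ + γ ^ 2 / 2 * C i

theorem expect_blockUpdate_le [DecidableEq ι] {Ψ : E → ℝ} (hΨ : ConvexOn ℝ Set.univ Ψ)
    {D : ι → Set E} {C : ι → ℝ} (hcurv : HasBlockCurvature Ψ D C) {x v : ι → E}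
    (hx : ∀ i, x i ∈ D i) (hv : ∀ i, v i ∈ D i) {γ : ℝ} (hγ : γ ∈ Set.Icc 0 1) {m : ℕ}
    (hm : m ≠ 0) (hmι : m ≤ Fintype.card ι) :
    𝔼 I ∈ univ.powersetCard m, Ψ (∑ i, blockUpdate x v (γ / m) I i) ≤
      Ψ (∑ i, x i) + γ * 𝔼 i, ⟪gradient Ψ (∑ j, x j), v i - x i⟫ + γ ^ 2 / 2 * 𝔼 i, C i := by
  set z := ∑ j, x j
  have hbatch : ∀ I ∈ univ.powersetCard m, Ψ (∑ i, blockUpdate x v (γ / m) I i) ≤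
      𝔼 i ∈ I, (Ψ z + γ * ⟪gradient Ψ z, v i - x i⟫ + γ ^ 2 / 2 * C i) := by
    intro I hI
    have hcard : #I = m := (mem_powersetCard.1 hI).2
    have hI : I.Nonempty := card_pos.1 (hcard ▸ Nat.pos_of_ne_zero hm)
    have hsum : ∑ i, blockUpdate x v (γ / m) I i =
        (#I : ℝ)⁻¹ • ∑ i ∈ I, (z + γ • (v i - x i)) := by
      rw [sum_blockUpdate, sum_add_distrib, sum_const, ← smul_sum, smul_add, hcard,
        ← Nat.cast_smul_eq_nsmul ℝ, smul_smul, inv_mul_cancel₀ (Nat.cast_ne_zero.2 hm),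
        one_smul, smul_smul, inv_mul_eq_div]
    calc Ψ (∑ i, blockUpdate x v (γ / m) I i)
        ≤ 𝔼 i ∈ I, Ψ (z + γ • (v i - x i)) :=
          hsum ▸ hΨ.map_inv_card_smul_sum_le_expect hI fun _ _ => Set.mem_univ _
      _ ≤ _ := expect_le_expect fun i _ => hcurv x hx i (v i) (hv i) γ hγ
  have : Nonempty ι := Fintype.card_pos_iff.1 (by omega)
  calc 𝔼 I ∈ univ.powersetCard m, Ψ (∑ i, blockUpdate x v (γ / m) I i)
      ≤ 𝔼 I ∈ univ.powersetCard m, 𝔼 i ∈ I,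
          (Ψ z + γ * ⟪gradient Ψ z, v i - x i⟫ + γ ^ 2 / 2 * C i) := expect_le_expect hbatch
    _ = 𝔼 i, (Ψ z + γ * ⟪gradient Ψ z, v i - x i⟫ + γ ^ 2 / 2 * C i) :=
        expect_powersetCard_expect univ hm (by simpa) _
    _ = _ := by
        rw [expect_add_distrib, expect_add_distrib, Fintype.expect_const, ← mul_expect,
          ← mul_expect]

theorem sum_inner_gradient_sub_le {Ψ : E → ℝ} (hΨ : ConvexOn ℝ Set.univ Ψ) {x : ι → E}
    (hd : DifferentiableAt ℝ Ψ (∑ j, x j)) {D : ι → Set E} {s : ι → E}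
    (hs : ∀ i, IsMinOn (fun y => ⟪gradient Ψ (∑ j, x j), y⟫) (D i) (s i))
    {y : ι → E} (hy : ∀ i, y i ∈ D i) :
    ∑ i, ⟪gradient Ψ (∑ j, x j), s i - x i⟫ ≤ Ψ (∑ i, y i) - Ψ (∑ i, x i) :=
  calc ∑ i, ⟪gradient Ψ (∑ j, x j), s i - x i⟫
      ≤ ∑ i, ⟪gradient Ψ (∑ j, x j), y i - x i⟫ :=
        sum_le_sum fun i _ => by simpa [inner_sub_right] using isMinOn_iff.1 (hs i) (y i) (hy i)
    _ = ⟪gradient Ψ (∑ j, x j), ∑ i, y i - ∑ i, x i⟫ := by rw [← sum_sub_distrib, inner_sum]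
    _ ≤ Ψ (∑ i, y i) - Ψ (∑ i, x i) := hΨ.inner_gradient_sub_le hd _

theorem expect_fw_blockUpdate_sub_le [DecidableEq ι] {Ψ : E → ℝ} (hΨ : ConvexOn ℝ Set.univ Ψ)
    {D : ι → Set E} {C : ι → ℝ} (hcurv : HasBlockCurvature Ψ D C) {x s y : ι → E}
    (hd : DifferentiableAt ℝ Ψ (∑ j, x j)) (hx : ∀ i, x i ∈ D i) (hsD : ∀ i, s i ∈ D i)
    (hs : ∀ i, IsMinOn (fun y => ⟪gradient Ψ (∑ j, x j), y⟫) (D i) (s i))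
    (hy : ∀ i, y i ∈ D i) {γ : ℝ} (hγ : γ ∈ Set.Icc 0 1) {m : ℕ} (hm : m ≠ 0)
    (hmι : m ≤ Fintype.card ι) :
    𝔼 I ∈ univ.powersetCard m, Ψ (∑ i, blockUpdate x s (γ / m) I i) - Ψ (∑ i, y i) ≤
      (1 - γ / Fintype.card ι) * (Ψ (∑ i, x i) - Ψ (∑ i, y i)) +
        γ ^ 2 / (2 * Fintype.card ι) * ∑ i, C i := by
  have hdescent := expect_blockUpdate_le hΨ hcurv hx hsD hγ hm hmι
  have hgap := sum_inner_gradient_sub_le hΨ hd hs hy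
  rw [Fintype.expect_eq_sum_div_card, Fintype.expect_eq_sum_div_card] at hdescent
  have hγ0 : 0 ≤ γ := hγ.1
  calc _ ≤ Ψ (∑ i, x i) + γ * ((∑ i, ⟪gradient Ψ (∑ j, x j), s i - x i⟫) / Fintype.card ι)
        + γ ^ 2 / 2 * ((∑ i, C i) / Fintype.card ι) - Ψ (∑ i, y i) := by linarith
    _ ≤ Ψ (∑ i, x i) + γ * ((Ψ (∑ i, y i) - Ψ (∑ i, x i)) / Fintype.card ι)
        + γ ^ 2 / 2 * ((∑ i, C i) / Fintype.card ι) - Ψ (∑ i, y i) := by gcongr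
    _ = _ := by ring

end BlockFrankWolfe

theorem batched_SOFW_expected_primal_convergence_general
    {E : Type*} [NormedAddCommGroup E] [InnerProductSpace ℝ E] [FiniteDimensional ℝ E]
    (n m : ℕ) (hm : 1 ≤ m) (hmn : m ≤ n)
    (D : Fin n → Set E)
    (hDconv : ∀ i, Convex ℝ (D i))
    (Ψ : E → ℝ) (hconv : ConvexOn ℝ Set.univ Ψ) (hdiff : Differentiable ℝ Ψ)
    (C : Fin n → ℝ) (hC0 : ∀ i, 0 ≤ C i)
    (hcurv : ∀ x : Fin n → E, (∀ j, x j ∈ D j) → ∀ i : Fin n, ∀ s ∈ D i,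
      ∀ γ ∈ Set.Icc (0 : ℝ) 1,
      Ψ ((∑ j, x j) + γ • (s - x i)) ≤
        Ψ (∑ j, x j) + γ * ⟪gradient Ψ (∑ j, x j), s - x i⟫ + γ ^ 2 / 2 * C i)
    (x0 : Fin n → E) (hx0 : ∀ i, x0 i ∈ D i)
    (γ : ℕ → ℝ) (hγ : ∀ k : ℕ, γ k = 2 * (n : ℝ) / ((k : ℝ) + 2 * (n : ℝ)))
    (s : (Fin n → E) → Fin n → E)
    (hs : ∀ x : Fin n → E, ∀ i : Fin n, s x i ∈ D i ∧
      ∀ y ∈ D i, ⟪gradient Ψ (∑ j, x j), s x i⟫ ≤ ⟪gradient Ψ (∑ j, x j), y⟫)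
    (X : (ℕ → Finset (Fin n)) → ℕ → Fin n → E)
    (hX0 : ∀ ω, X ω 0 = x0)
    (hXstep : ∀ ω : ℕ → Finset (Fin n), ∀ k : ℕ, ∀ i : Fin n,
      X ω (k + 1) i =
        if i ∈ ω k then X ω k i + (γ k / (m : ℝ)) • (s (X ω k) i - X ω k i)
        else X ω k i)
    (Ψstar : ℝ)
    (hΨstar : IsLeast {v : ℝ | ∃ y : Fin n → E, (∀ i, y i ∈ D i) ∧ v = Ψ (∑ i, y i)} Ψstar) :
    ∀ k : ℕ,
      ((n.choose m : ℝ) ^ k)⁻¹ *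
          (∑ σ ∈ Fintype.piFinset
              (fun _ : Fin k => Finset.powersetCard m (Finset.univ : Finset (Fin n))),
            Ψ (∑ i, X (fun j => if h : j < k then σ ⟨j, h⟩
                else Finset.filter (fun i : Fin n => (i : ℕ) < m) Finset.univ) k i))
        - Ψstar
      ≤ 2 * (n : ℝ) / ((k : ℝ) + 2 * (n : ℝ)) * ((∑ i, C i) + Ψ (∑ i, x0 i) - Ψstar) := by
  intro k
  have hn : (1 : ℝ) ≤ n := by exact_mod_cast hm.trans hmn
  have hγI : ∀ k, γ k ∈ Set.Icc (0 : ℝ) 1 :=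
    fun k => hγ k ▸ two_mul_div_add_two_mul_mem_Icc (by linarith) k
  have hγm : ∀ k, γ k / m ∈ Set.Icc (0 : ℝ) 1 := fun k =>
    ⟨div_nonneg (hγI k).1 m.cast_nonneg,
      div_le_one_of_le₀ ((hγI k).2.trans (by exact_mod_cast hm)) m.cast_nonneg⟩
  have hXstep' : ∀ ω k, X ω (k + 1) = blockUpdate (X ω k) (s (X ω k)) (γ k / m) (ω k) :=
    fun ω k => funext (hXstep ω k)
  have hmem : ∀ ω k i, X ω k i ∈ D i :=
    trajectory_mem hX0 hXstep' (S := {x | ∀ i, x i ∈ D i}) hx0 fun k x hx I =>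
      blockUpdate_mem hDconv hx (fun i => (hs x i).1) (hγm k) I
  obtain ⟨⟨y, hy, rfl⟩, hlb⟩ := hΨstar
  set P := (univ : Finset (Fin n)).powersetCard m
  set d := Finset.filter (fun i : Fin n => (i : ℕ) < m) Finset.univ
  let gap : ℕ → ℝ := fun k => 𝔼 σ ∈ Fintype.piFinset (fun _ : Fin k => P),
    Ψ (∑ i, X (padSeq d σ) k i) - Ψ (∑ i, y i)
  have hrec : ∀ k, gap (k + 1) ≤ (1 - γ k / n) * gap k + γ k ^ 2 / (2 * n) * ∑ i, C i :=
    fun k => expect_trajectory_succ_le (T := fun k x I => blockUpdate x (s x) (γ k / m) I)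
      hX0 hXstep' (powersetCard_nonempty.2 (by simpa using hmn)) d (fun x => Ψ (∑ i, x i)) k
      fun ω => by
        simpa only [Fintype.card_fin] using expect_fw_blockUpdate_sub_le hconv hcurv
          (hdiff _) (hmem ω k) (fun i => (hs _ i).1) (fun i => isMinOn_iff.2 (hs _ i).2) hy
          (hγI k) (by omega : m ≠ 0) (by simpa)
  have hC : 0 ≤ ∑ i, C i := sum_nonneg fun i _ => hC0 i
  have hx0y : Ψ (∑ i, y i) ≤ Ψ (∑ i, x0 i) := hlb ⟨x0, hx0, rfl⟩
  have hrate := le_mul_of_le_one_sub_div_mul_add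
    (B := ∑ i, C i + Ψ (∑ i, x0 i) - Ψ (∑ i, y i)) hn hγ hC (by linarith)
    (by simpa [gap, hX0] using hC) hrec k
  rw [← hγ k, show (n.choose m : ℝ) = #P by simp [P],
    ← Fintype.expect_piFinset_const_eq_inv_pow_mul_sum]
  exact hrate

/-- **Expected primal convergence of batched SOFW.**
Blocks `D i` are nonempty convex compact subsets of a finite-dimensional real inner
product space, `Ψ` is convex and differentiable with block curvature constants `C i ≥ 0`,
`s x i` is a Frank-Wolfe atom of block `i` at the decomposition `x`, and
`X ω` is the trajectory of the batched SOFW iteration driven by the batch sequence `ω`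
with step sizes `γ k = 2n/(k+2n)`. Then the average of `Ψ (∑ i, X ω k i)` over all
`(n.choose m)^k` choices of the first `k` batches (each a uniformly chosen subset of
cardinality `m`) satisfies
`𝔼[Ψ(∑ i, x^k_i)] - Ψ* ≤ 2n/(k+2n) * (C⊗ + Ψ(∑ i, x⁰_i) - Ψ*)`. -/
theorem batched_SOFW_expected_primal_convergence
    {E : Type*} [NormedAddCommGroup E] [InnerProductSpace ℝ E] [FiniteDimensional ℝ E]
    (n m : ℕ) (hm : 1 ≤ m) (hmn : m ≤ n)
    (D : Fin n → Set E) (hDne : ∀ i, (D i).Nonempty)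
    (hDconv : ∀ i, Convex ℝ (D i)) (hDcomp : ∀ i, IsCompact (D i))
    (Ψ : E → ℝ) (hconv : ConvexOn ℝ Set.univ Ψ) (hdiff : Differentiable ℝ Ψ)
    (C : Fin n → ℝ) (hC0 : ∀ i, 0 ≤ C i)
    (hcurv : ∀ x : Fin n → E, (∀ j, x j ∈ D j) → ∀ i : Fin n, ∀ s ∈ D i,
      ∀ γ ∈ Set.Icc (0 : ℝ) 1,
      Ψ ((∑ j, x j) + γ • (s - x i)) ≤
        Ψ (∑ j, x j) + γ * ⟪gradient Ψ (∑ j, x j), s - x i⟫ + γ ^ 2 / 2 * C i)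
    (x0 : Fin n → E) (hx0 : ∀ i, x0 i ∈ D i)
    (γ : ℕ → ℝ) (hγ : ∀ k : ℕ, γ k = 2 * (n : ℝ) / ((k : ℝ) + 2 * (n : ℝ)))
    (s : (Fin n → E) → Fin n → E)
    (hs : ∀ x : Fin n → E, ∀ i : Fin n, s x i ∈ D i ∧
      ∀ y ∈ D i, ⟪gradient Ψ (∑ j, x j), s x i⟫ ≤ ⟪gradient Ψ (∑ j, x j), y⟫)
    (X : (ℕ → Finset (Fin n)) → ℕ → Fin n → E)
    (hX0 : ∀ ω, X ω 0 = x0)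
    (hXstep : ∀ ω : ℕ → Finset (Fin n), ∀ k : ℕ, ∀ i : Fin n,
      X ω (k + 1) i =
        if i ∈ ω k then X ω k i + (γ k / (m : ℝ)) • (s (X ω k) i - X ω k i)
        else X ω k i)
    (Ψstar : ℝ)
    (hΨstar : IsLeast {v : ℝ | ∃ y : Fin n → E, (∀ i, y i ∈ D i) ∧ v = Ψ (∑ i, y i)} Ψstar) :
    ∀ k : ℕ,
      ((n.choose m : ℝ) ^ k)⁻¹ *
          (∑ σ ∈ Fintype.piFinset
              (fun _ : Fin k => Finset.powersetCard m (Finset.univ : Finset (Fin n))),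
            Ψ (∑ i, X (fun j => if h : j < k then σ ⟨j, h⟩
                else Finset.filter (fun i : Fin n => (i : ℕ) < m) Finset.univ) k i))
        - Ψstar
      ≤ 2 * (n : ℝ) / ((k : ℝ) + 2 * (n : ℝ)) * ((∑ i, C i) + Ψ (∑ i, x0 i) - Ψstar) :=
  batched_SOFW_expected_primal_convergence_general n m hm hmn D hDconv Ψ hconv hdiff C hC0 hcurv x0
    hx0 γ hγ s hs X hX0 hXstep Ψstar hΨstar
end
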